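/- arXiv:1609.00763 — 3 statements merged into one kernel-verified Lean document; each statement's English description precedes it below -/
import Mathlib

section
/- Let G be a connected multigraph and let (L,H) be a cover of G with |L(v)| ≥ deg_G(v) for all vertices v. Suppose there are a vertex v₁ and a color x₁ ∈ L(v₁) such that the multigraph G − v₁ (obtained by deleting v₁) is connected and, for some vertex v₂ ≠ v₁, the color x₁ has fewer than e_G(v₁,v₂) H-neighbors in L(v₂). Then G is (L,H)-colorable. -/
/-! Color `v₁` with `x₁`, then color the remaining vertices greedily in order of non-increasing
distance from `v₂` in `G - v₁`. When a vertex `u ≠ v₂` gets its color, its neighbor `p` on a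
shortest path to `v₂` in `G - v₁` is still uncolored, so at most `deg u - e(u,p) < |L u|` of its
colors are blocked. The vertex `v₂` comes last; there `x₁` blocks fewer than `e(v₁,v₂)` colors,
so again fewer than `deg v₂` colors are blocked. -/

open scoped Classical

/-- A multigraph on vertex type `V`: a symmetric edge-multiplicity function with no loops. -/
structure Multigraph (V : Type) where
  e : V → V → ℕ
  symm : ∀ u v, e u v = e v u
  loopless : ∀ v, e v v = 0

namespace Multigraph

variable {V : Type}

/-- `u` and `v` are adjacent if they are distinct and joined by at least one edge. -/
def Adj (G : Multigraph V) (u v : V) : Prop := u ≠ v ∧ 1 ≤ G.e u v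

/-- The underlying simple graph of a multigraph. -/
def toSimpleGraph (G : Multigraph V) : SimpleGraph V where
  Adj := G.Adj
  symm := ⟨fun u v h => ⟨Ne.symm h.1, by rw [G.symm]; exact h.2⟩⟩
  loopless := ⟨fun v h => h.1 rfl⟩

/-- The degree of a vertex: the sum of edge multiplicities at it. -/
def deg [Fintype V] (G : Multigraph V) (v : V) : ℕ := ∑ u, G.e v u

/-- The induced sub-multigraph on a set of vertices. -/
def induce (G : Multigraph V) (B : Set V) : Multigraph B where
  e u v := G.e u v
  symm u v := G.symm u v
  loopless v := G.loopless v

/-- A cover `(L, H)` of a multigraph `G`: pairwise disjoint lists `L v` of colors and a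
graph `H` on the union of the lists (given by its adjacency relation `HAdj`), such that each
`L v` spans a clique, every edge of `H` joins colors of a single list or colors of lists of
adjacent vertices, and each color of `L u` has at most `e_G(u,v)` neighbors in `L v`. -/
structure Cover (G : Multigraph V) (C : Type) where
  L : V → Finset C
  HAdj : C → C → Prop
  Hsymm : ∀ x y, HAdj x y → HAdj y x
  Hirrefl : ∀ x, ¬ HAdj x x
  disjoint : ∀ u v, u ≠ v → Disjoint (L u) (L v)
  cliques : ∀ v, ∀ x ∈ L v, ∀ y ∈ L v, x ≠ y → HAdj x y
  edges_within : ∀ x y, HAdj x y → ∃ u v, x ∈ L u ∧ y ∈ L v ∧ (u = v ∨ G.Adj u v)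
  matching : ∀ u v, u ≠ v → ∀ x ∈ L u, ((L v).filter fun y => HAdj x y).card ≤ G.e u v

/-- An `(L,H)`-coloring: an independent set of `H` meeting every list in exactly one color. -/
def Cover.IsColoring {G : Multigraph V} {C : Type} (cov : Cover G C) (I : Finset C) : Prop :=
  (∀ x ∈ I, ∃ v, x ∈ cov.L v) ∧
  (∀ x ∈ I, ∀ y ∈ I, ¬ cov.HAdj x y) ∧
  (∀ v, (I ∩ cov.L v).card = 1)

/-- `G` is `(L,H)`-colorable if an `(L,H)`-coloring exists. -/
def Cover.Colorable {G : Multigraph V} {C : Type} (cov : Cover G C) : Prop :=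
  ∃ I, cov.IsColoring I

/-- `G` is DP-degree-colorable if it is `(L,H)`-colorable whenever `|L v| ≥ deg v` for all `v`. -/
def DPDegreeColorable [Fintype V] (G : Multigraph V) : Prop :=
  ∀ (C : Type) (cov : Cover G C), (∀ v, G.deg v ≤ (cov.L v).card) → cov.Colorable

/-- The DP-chromatic number: the least `k` such that `G` is `(L,H)`-colorable for every cover
with all lists of size at least `k`. -/
noncomputable def DPChromatic [Fintype V] (G : Multigraph V) : ℕ :=
  sInf {k | ∀ (C : Type) (cov : Cover G C), (∀ v, k ≤ (cov.L v).card) → cov.Colorable}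

/-- The sub-multigraph of `G` on vertex set `A` with multiplicities `e' ≤ e_G`. -/
def subMG (G : Multigraph V) (A : Finset V) (e' : V → V → ℕ)
    (hsymm : ∀ u v, e' u v = e' v u) (hle : ∀ u v, e' u v ≤ G.e u v) :
    Multigraph {x // x ∈ A} where
  e u v := e' u v
  symm u v := hsymm u v
  loopless v := Nat.le_zero.mp (le_of_le_of_eq (hle v v) (G.loopless v))

/-- `G` is DP-`k`-critical: `χ_DP(G) = k` and every proper sub-multigraph (obtained by deleting
vertices and/or decreasing edge multiplicities) has smaller DP-chromatic number. -/
def DPCritical [Fintype V] (G : Multigraph V) (k : ℕ) : Prop :=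
  DPChromatic G = k ∧
  ∀ (A : Finset V) (e' : V → V → ℕ) (hsymm : ∀ u v, e' u v = e' v u)
    (hle : ∀ u v, e' u v ≤ G.e u v),
    (∀ u v, e' u v ≠ 0 → u ∈ A ∧ v ∈ A) →
    ¬(A = Finset.univ ∧ e' = G.e) →
    DPChromatic (subMG G A e' hsymm hle) < k

/-- `G[B]` is connected and has no cut vertex. -/
def Nonseparable (G : Multigraph V) (B : Set V) : Prop :=
  B.Nonempty ∧ (G.induce B).toSimpleGraph.Connected ∧
    ∀ v ∈ B, (G.induce (B \ {v})).toSimpleGraph.Preconnected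

/-- A block of `G`: a maximal vertex set inducing a connected sub-multigraph with no cut vertex. -/
def IsBlock (G : Multigraph V) (B : Set V) : Prop :=
  Nonseparable G B ∧ ∀ B', B ⊆ B' → Nonseparable G B' → B' = B

/-- `G` is 2-connected: connected, at least two vertices, and deleting any one vertex leaves
it connected. -/
def TwoConnected [Fintype V] (G : Multigraph V) : Prop :=
  G.toSimpleGraph.Connected ∧ 2 ≤ Fintype.card V ∧
    ∀ v : V, (G.induce ({v}ᶜ : Set V)).toSimpleGraph.Connected

end Multigraph

/-- A simple graph is a cycle iff it is connected and every vertex has exactly two neighbors. -/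
def IsCycleGraph {α : Type} (S : SimpleGraph α) : Prop :=
  S.Connected ∧ ∀ v, {u | S.Adj v u}.ncard = 2

/-- The multigraph `K_n^k`: `n` vertices, every two distinct vertices joined by `k` edges. -/
def KMG (n k : ℕ) : Multigraph (Fin n) where
  e u v := if u = v then 0 else k
  symm u v := by by_cases h : u = v <;> simp [h, eq_comm]
  loopless v := by simp

/-- The multigraph `C_n^k`: the `n`-cycle with every edge of multiplicity `k`. -/
def CMG (n k : ℕ) : Multigraph (Fin n) where
  e u v := if u ≠ v ∧ ((u.val + 1) % n = v.val ∨ (v.val + 1) % n = u.val) then k else 0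
  symm u v := by
    apply if_congr _ rfl rfl
    constructor
    · rintro ⟨h1, h2⟩; exact ⟨h1.symm, h2.symm⟩
    · rintro ⟨h1, h2⟩; exact ⟨h1.symm, h2.symm⟩
  loopless v := by simp

theorem SimpleGraph.Connected.exists_adj_dist_lt {α : Type*} {G : SimpleGraph α}
    (hG : G.Connected) {u v : α} (hne : u ≠ v) : ∃ w, G.Adj v w ∧ G.dist u w < G.dist u v := by
  obtain ⟨p, hp⟩ := hG.exists_walk_length_eq_dist v u
  cases p with
  | nil => exact absurd rfl hne
  | cons hadj q =>
    refine ⟨_, hadj, ?_⟩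
    have hq := G.dist_le q
    rw [SimpleGraph.Walk.length_cons] at hp
    rw [G.dist_comm, G.dist_comm (u := u)]
    omega

namespace Multigraph

variable {V C : Type}

theorem exists_rank_of_connected_induce (G : Multigraph V) {B : Set V}
    (hB : (G.induce B).toSimpleGraph.Connected) (b : B) :
    ∃ d : V → ℕ, ∀ u : B, u ≠ b → ∃ p : B, 1 ≤ G.e u p ∧ d p < d u := by
  refine ⟨fun v => if h : v ∈ B then (G.induce B).toSimpleGraph.dist b ⟨v, h⟩ else 0,
    fun u hu => ?_⟩
  obtain ⟨p, hadj, hlt⟩ := hB.exists_adj_dist_lt (Ne.symm hu)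
  exact ⟨p, hadj.2, by simpa only [dif_pos p.2, dif_pos u.2] using hlt⟩

theorem sum_e_le_deg [Fintype V] (G : Multigraph V) (T : Finset V) (u : V) :
    ∑ w ∈ T, G.e w u ≤ G.deg u := by
  simp only [deg, G.symm u]
  exact Finset.sum_le_sum_of_subset (Finset.subset_univ T)

namespace Cover

variable {G : Multigraph V} (cov : Cover G C)

def IsPartialColoring (S : Finset V) (f : V → C) : Prop :=
  (∀ v ∈ S, f v ∈ cov.L v) ∧ ∀ u ∈ S, ∀ w ∈ S, ¬ cov.HAdj (f u) (f w)

noncomputable def blocked (S : Finset V) (f : V → C) (u : V) : Finset C :=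
  (cov.L u).filter fun y => ∃ w ∈ S, cov.HAdj (f w) y

theorem isPartialColoring_singleton {v : V} {x : C} (hx : x ∈ cov.L v) :
    cov.IsPartialColoring {v} fun _ => x :=
  ⟨by simpa using hx, fun _ _ _ _ => cov.Hirrefl x⟩

theorem blocked_singleton (v : V) (x : C) (u : V) :
    cov.blocked {v} (fun _ => x) u = (cov.L u).filter fun y => cov.HAdj x y := by
  simp [blocked]

variable {cov}

theorem IsPartialColoring.extend {S : Finset V} {f : V → C} (hf : cov.IsPartialColoring S f)
    {u : V} (hu : u ∉ S) {y : C} (hy : y ∈ cov.L u) (hfree : y ∉ cov.blocked S f u) :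
    cov.IsPartialColoring (insert u S) (Function.update f u y) := by
  have hupd : ∀ w ∈ S, Function.update f u y w = f w := fun w hw =>
    Function.update_of_ne (ne_of_mem_of_not_mem hw hu) _ _
  have hfree' : ∀ w ∈ S, ¬ cov.HAdj (f w) y := fun w hw h =>
    hfree (Finset.mem_filter.mpr ⟨hy, w, hw, h⟩)
  refine ⟨?_, ?_⟩
  · intro v hv
    rcases Finset.mem_insert.mp hv with rfl | hv
    · simpa using hy
    · simpa [hupd v hv] using hf.1 v hv
  · simp only [Finset.forall_mem_insert, Function.update_self]
    refine ⟨⟨cov.Hirrefl y, fun b hb => ?_⟩, fun a ha => ⟨?_, fun b hb => ?_⟩⟩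
    · rw [hupd b hb]; exact fun h => hfree' b hb (cov.Hsymm _ _ h)
    · rw [hupd a ha]; exact hfree' a ha
    · rw [hupd a ha, hupd b hb]; exact hf.2 a ha b hb

theorem card_blocked_insert_le {S : Finset V} {f : V → C} {u u' : V} {y : C}
    (hy : y ∈ cov.L u) (hu : u ∉ S) (hne : u ≠ u') :
    (cov.blocked (insert u S) (Function.update f u y) u').card ≤
      (cov.blocked S f u').card + G.e u u' := by
  have hsub : cov.blocked (insert u S) (Function.update f u y) u' ⊆
      cov.blocked S f u' ∪ (cov.L u').filter fun z => cov.HAdj y z := by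
    intro z hz
    obtain ⟨hz, w, hw, hadj⟩ := Finset.mem_filter.mp hz
    rcases Finset.mem_insert.mp hw with rfl | hw
    · simp_all
    · rw [Function.update_of_ne (ne_of_mem_of_not_mem hw hu)] at hadj
      exact Finset.mem_union_left _ (Finset.mem_filter.mpr ⟨hz, w, hw, hadj⟩)
  calc _ ≤ _ := Finset.card_le_card hsub
    _ ≤ _ := Finset.card_union_le _ _
    _ ≤ _ := Nat.add_le_add_left (cov.matching u u' hne y hy) _

theorem IsPartialColoring.colorable [Fintype V] {f : V → C}
    (hf : cov.IsPartialColoring Finset.univ f) : cov.Colorable := by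
  refine ⟨Finset.univ.image f, ?_, ?_, fun v => ?_⟩
  · simp only [Finset.mem_image, Finset.mem_univ, true_and, forall_exists_index,
      forall_apply_eq_imp_iff]
    exact fun v => ⟨v, hf.1 v (Finset.mem_univ v)⟩
  · simp only [Finset.mem_image, Finset.mem_univ, true_and, forall_exists_index,
      forall_apply_eq_imp_iff]
    exact fun a b => hf.2 a (Finset.mem_univ a) b (Finset.mem_univ b)
  · suffices Finset.univ.image f ∩ cov.L v = {f v} by rw [this, Finset.card_singleton]
    ext x
    simp only [Finset.mem_inter, Finset.mem_image, Finset.mem_univ, true_and,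
      Finset.mem_singleton]
    constructor
    · rintro ⟨⟨w, rfl⟩, hx⟩
      by_contra hne
      exact Finset.disjoint_left.mp (cov.disjoint w v fun h => hne (h ▸ rfl))
        (hf.1 w (Finset.mem_univ w)) hx
    · rintro rfl
      exact ⟨⟨v, rfl⟩, hf.1 v (Finset.mem_univ v)⟩

variable (cov)

/-- The slack condition bounds the colors of `L u` blocked now plus those that the still
uncolored vertices of rank at least `d u` may block later; it survives coloring an uncolored
vertex of maximal rank. -/
theorem colorable_of_slack [Fintype V] (d : V → ℕ) (S : Finset V) (f : V → C)
    (hf : cov.IsPartialColoring S f)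
    (hslack : ∀ u ∉ S, (cov.blocked S f u).card +
      ∑ w ∈ (Sᶜ.erase u).filter (fun w => d u ≤ d w), G.e w u < (cov.L u).card) :
    cov.Colorable := by
  by_cases hS : S = Finset.univ
  · subst hS; exact hf.colorable
  obtain ⟨u, hu, hmax⟩ := Sᶜ.exists_max_image d
    ((Finset.compl_ne_univ_iff_nonempty _).mp (by rwa [compl_compl]))
  have huS : u ∉ S := Finset.mem_compl.mp hu
  obtain ⟨y, hy, hfree⟩ : ∃ y ∈ cov.L u, y ∉ cov.blocked S f u :=
    Finset.exists_mem_notMem_of_card_lt_card (by have := hslack u huS; omega)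
  refine colorable_of_slack d (insert u S) _ (hf.extend huS hy hfree) fun u' hu' => ?_
  obtain ⟨hne, hu'S⟩ : u' ≠ u ∧ u' ∉ S := by simpa using hu'
  have hsum : ∑ w ∈ ((insert u S)ᶜ.erase u').filter (fun w => d u' ≤ d w), G.e w u' + G.e u u'
      = ∑ w ∈ (Sᶜ.erase u').filter (fun w => d u' ≤ d w), G.e w u' := by
    rw [Finset.compl_insert, Finset.erase_right_comm, Finset.filter_erase]
    exact Finset.sum_erase_add _ _ (by simp [hu, hne.symm, hmax u' (Finset.mem_compl.mpr hu'S)])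
  have := hslack u' hu'S
  have := card_blocked_insert_le (f := f) hy huS hne.symm
  omega
termination_by Sᶜ.card
decreasing_by
  exact Finset.card_lt_card (by rw [Finset.compl_insert]; exact Finset.erase_ssubset hu)

end Cover

end Multigraph

open Multigraph in
theorem statement5_general {V C : Type} [Fintype V] (G : Multigraph V)
    (cov : Cover G C)
    (hL : ∀ v, G.deg v ≤ (cov.L v).card)
    (v₁ : V) (x₁ : C) (hx₁ : x₁ ∈ cov.L v₁)
    (hdel : (G.induce ({v₁}ᶜ : Set V)).toSimpleGraph.Connected)
    (v₂ : V) (hne : v₂ ≠ v₁)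
    (hfew : ((cov.L v₂).filter fun y => cov.HAdj x₁ y).card < G.e v₁ v₂) :
    cov.Colorable := by
  obtain ⟨d, hd⟩ := G.exists_rank_of_connected_induce hdel ⟨v₂, hne⟩
  refine cov.colorable_of_slack d {v₁} _ (cov.isPartialColoring_singleton hx₁) fun u hu => ?_
  have hu₁ : u ≠ v₁ := by simpa using hu
  set T := (({v₁} : Finset V)ᶜ.erase u).filter fun w => d u ≤ d w
  have hv₁T : v₁ ∉ T := by simp [T]
  have hblocked := cov.matching v₁ u hu₁.symm x₁ hx₁
  rw [Cover.blocked_singleton]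
  refine lt_of_lt_of_le ?_ (hL u)
  by_cases hu₂ : u = v₂
  · subst hu₂
    have := G.sum_e_le_deg (insert v₁ T) u
    rw [Finset.sum_insert hv₁T] at this
    omega
  · obtain ⟨⟨p, hp₁⟩, hpu, hdp⟩ := hd ⟨u, hu₁⟩ fun h => hu₂ (congrArg Subtype.val h)
    dsimp only at hpu hdp
    have hpT : p ∉ T := by simp [T]; omega
    have := G.sum_e_le_deg (insert v₁ (insert p T)) u
    rw [Finset.sum_insert (by simp [hv₁T, Ne.symm hp₁]), Finset.sum_insert hpT] at this
    rw [G.symm] at hpu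
    omega

open Multigraph in
/-- **Lemma (non-saturated color).** Let `G` be a connected multigraph and `(L,H)` a cover with
`|L v| ≥ deg v` for all `v`. If there are a vertex `v₁` and a color `x₁ ∈ L v₁` such that
`G - v₁` is connected and for some `v₂ ≠ v₁` the color `x₁` has fewer than `e_G(v₁,v₂)`
`H`-neighbors in `L v₂`, then `G` is `(L,H)`-colorable. -/
theorem statement5 {V C : Type} [Fintype V] (G : Multigraph V)
    (hconn : G.toSimpleGraph.Connected) (cov : Cover G C)
    (hL : ∀ v, G.deg v ≤ (cov.L v).card)
    (v₁ : V) (x₁ : C) (hx₁ : x₁ ∈ cov.L v₁)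
    (hdel : (G.induce ({v₁}ᶜ : Set V)).toSimpleGraph.Connected)
    (v₂ : V) (hne : v₂ ≠ v₁)
    (hfew : ((cov.L v₂).filter fun y => cov.HAdj x₁ y).card < G.e v₁ v₂) :
    cov.Colorable :=
  statement5_general G cov hL v₁ x₁ hx₁ hdel v₂ hne hfew
end

section
/- Let G be a 2-connected multigraph and let (L,H) be a cover of G with |L(v)| ≥ deg_G(v) for all vertices v. If G is not (L,H)-colorable, then G is regular (all vertex degrees equal) and, for every pair of adjacent vertices v₁, v₂, the bipartite graph formed by the edges of H between L(v₁) and L(v₂) is e_G(v₁,v₂)-regular, i.e., every element of L(v₁) has exactly e_G(v₁,v₂) H-neighbors in L(v₂) and every element of L(v₂) has exactly e_G(v₁,v₂) H-neighbors in L(v₁). -/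
open scoped Classical

/-! A vertex whose list is longer than its degree can be coloured last, so a connected
multigraph with such a vertex is colourable greedily. If `G` is not colourable, this forces
`|L v| = deg v` everywhere. If some colour `x ∈ L v₁` had fewer than `e(v₁, v₂)` neighbours in
`L v₂`, colour `v₁` by `x` and delete the neighbours of `x` from the other lists: in the
connected graph `G - v₁` every list still has at least the remaining degree and `v₂` has a
spare colour, so `G` would be colourable. Double counting the edges between `L v₁` and `L v₂`
then gives `|L v₁| = |L v₂|` for adjacent vertices, and connectivity gives regularity. -/

open Finset Relation Function

namespace Multigraph

variable {V C : Type} {G : Multigraph V}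

lemma Adj.symm {u v : V} (h : G.Adj u v) : G.Adj v u :=
  G.toSimpleGraph.adj_symm h

lemma eq_of_reachable_of_forall_adj {α : Type*} (φ : V → α) (hφ : ∀ u v, G.Adj u v → φ u = φ v)
    {u v : V} (h : G.toSimpleGraph.Reachable u v) : φ u = φ v := by
  rw [SimpleGraph.reachable_iff_reflTransGen] at h
  induction h with
  | refl => rfl
  | tail _ hab ih => exact ih.trans (hφ _ _ hab)

def degIn (G : Multigraph V) (A : Finset V) (w : V) : ℕ := ∑ u ∈ A, G.e w u

lemma degIn_erase_add {A : Finset V} {s : V} (hs : s ∈ A) (w : V) :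
    G.degIn (A.erase s) w + G.e w s = G.degIn A w :=
  sum_erase_add A _ hs

lemma degIn_erase_le (A : Finset V) (s w : V) : G.degIn (A.erase s) w ≤ G.degIn A w :=
  sum_le_sum_of_subset (erase_subset s A)

def AdjIn (G : Multigraph V) (A : Finset V) (u v : V) : Prop := u ∈ A ∧ v ∈ A ∧ G.Adj u v

lemma mem_of_reflTransGen_adjIn {A : Finset V} {w t : V} (hw : w ∈ A)
    (h : ReflTransGen (G.AdjIn A) w t) : t ∈ A := by
  rcases h.cases_tail with rfl | ⟨_, -, -, ht, -⟩
  exacts [hw, ht]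

lemma reflTransGen_adjIn_univ_of_reachable [Fintype V] {u v : V}
    (h : G.toSimpleGraph.Reachable u v) : ReflTransGen (G.AdjIn univ) u v :=
  ReflTransGen.mono (fun a b hab => ⟨mem_univ a, mem_univ b, hab⟩) u v
    ((SimpleGraph.reachable_iff_reflTransGen u v).1 h)

lemma reflTransGen_adjIn_of_reachable_induce {S : Set V} {A : Finset V} (hSA : ∀ v ∈ S, v ∈ A)
    {u v : S} (h : (G.induce S).toSimpleGraph.Reachable u v) :
    ReflTransGen (G.AdjIn A) u v :=
  ReflTransGen.lift Subtype.val
    (fun a b hab => ⟨hSA a a.2, hSA b b.2, fun h => hab.1 (Subtype.ext h), hab.2⟩) u v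
    ((SimpleGraph.reachable_iff_reflTransGen u v).1 h)

lemma reflTransGen_adjIn_erase {A : Finset V} {s w t : V} (hw : w ≠ s)
    (h : ReflTransGen (G.AdjIn A) w t) :
    ReflTransGen (G.AdjIn (A.erase s)) w t ∨
      ∃ z, G.Adj z s ∧ ReflTransGen (G.AdjIn (A.erase s)) w z := by
  revert hw
  induction h using ReflTransGen.head_induction_on with
  | refl => exact fun _ => Or.inl .refl
  | @head a b hab _ ih =>
    intro ha
    obtain ⟨haA, hbA, hadj⟩ := hab
    by_cases hb : b = s
    · exact Or.inr ⟨a, hb ▸ hadj, .refl⟩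
    have hstep : G.AdjIn (A.erase s) a b := ⟨mem_erase.2 ⟨ha, haA⟩, mem_erase.2 ⟨hb, hbA⟩, hadj⟩
    rcases ih hb with hbt | ⟨z, hz, hbz⟩
    · exact Or.inl (.head hstep hbt)
    · exact Or.inr ⟨z, hz, .head hstep hbz⟩

/-- Deleting `s` lowers the degree of each of its neighbours, so they become slack: a vertex
whose route to a slack vertex passed through `s` now stops at such a neighbour. -/
lemma exists_reach_slack_erase {A : Finset V} {k : V → ℕ} (hdeg : ∀ w ∈ A, G.degIn A w ≤ k w)
    (hreach : ∀ w ∈ A, ∃ t, G.degIn A t < k t ∧ ReflTransGen (G.AdjIn A) w t)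
    {s : V} (hs : s ∈ A) : ∀ w ∈ A.erase s,
      ∃ t, G.degIn (A.erase s) t < k t ∧ ReflTransGen (G.AdjIn (A.erase s)) w t := by
  intro w hw
  obtain ⟨t, ht, hwt⟩ := hreach w (mem_of_mem_erase hw)
  rcases reflTransGen_adjIn_erase (ne_of_mem_erase hw) hwt with hwt' | ⟨z, hzs, hwz⟩
  · exact ⟨t, (degIn_erase_le A s t).trans_lt ht, hwt'⟩
  · refine ⟨z, ?_, hwz⟩
    have hsplit := degIn_erase_add (G := G) hs z
    have hz := hdeg z (mem_of_mem_erase (mem_of_reflTransGen_adjIn hw hwz))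
    have hzs' := hzs.2
    omega

namespace Cover

variable (cov : Cover G C)

def IsColoringOn (L' : V → Finset C) (A : Finset V) (f : V → C) : Prop :=
  (∀ v ∈ A, f v ∈ L' v) ∧ ∀ u ∈ A, ∀ v ∈ A, u ≠ v → ¬ cov.HAdj (f u) (f v)

variable {cov}

lemma IsColoringOn.update {L' : V → Finset C} {A : Finset V} {f : V → C}
    (hf : cov.IsColoringOn L' A f) {s : V} (hs : s ∉ A) {x : C} (hx : x ∈ L' s)
    (hfree : ∀ u ∈ A, ¬ cov.HAdj (f u) x) :
    cov.IsColoringOn L' (insert s A) (update f s x) := by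
  have hmem : ∀ {v}, v ∈ insert s A → v ≠ s → v ∈ A := fun hv hvs =>
    (mem_insert.1 hv).resolve_left hvs
  constructor
  · intro v hv
    rcases eq_or_ne v s with rfl | hvs
    · rwa [update_self]
    · rw [update_of_ne hvs]
      exact hf.1 v (hmem hv hvs)
  · intro u hu v hv huv
    rcases eq_or_ne s u with rfl | hus <;> rcases eq_or_ne s v with rfl | hvs
    · exact absurd rfl huv
    · rw [update_self, update_of_ne hvs.symm]
      exact fun h => hfree v (hmem hv hvs.symm) (cov.Hsymm _ _ h)
    · rw [update_of_ne hus.symm, update_self]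
      exact hfree u (hmem hu hus.symm)
    · rw [update_of_ne hus.symm, update_of_ne hvs.symm]
      exact hf.2 u (hmem hu hus.symm) v (hmem hv hvs.symm) huv

lemma colorable_of_isColoringOn_univ [Fintype V] {L' : V → Finset C} {f : V → C}
    (hsub : ∀ v, L' v ⊆ cov.L v) (hf : cov.IsColoringOn L' univ f) : cov.Colorable := by
  have hfL : ∀ v, f v ∈ cov.L v := fun v => hsub v (hf.1 v (mem_univ v))
  refine ⟨univ.image f, ?_, ?_, fun v => card_eq_one.2 ⟨f v, ?_⟩⟩
  · simp only [mem_image, mem_univ, true_and, forall_exists_index, forall_apply_eq_imp_iff]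
    exact fun a => ⟨a, hfL a⟩
  · simp only [mem_image, mem_univ, true_and, forall_exists_index, forall_apply_eq_imp_iff]
    intro a b
    rcases eq_or_ne a b with rfl | hab
    exacts [cov.Hirrefl _, hf.2 a (mem_univ a) b (mem_univ b) hab]
  · refine eq_singleton_iff_unique_mem.2 ⟨mem_inter.2 ⟨mem_image_of_mem f (mem_univ v), hfL v⟩, ?_⟩
    simp only [mem_inter, mem_image, mem_univ, true_and, and_imp, forall_exists_index,
      forall_apply_eq_imp_iff]
    intro a hav
    by_contra hne
    exact disjoint_left.1 (cov.disjoint a v fun h => hne (h ▸ rfl)) (hfL a) hav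

/-- Each colour of `L u` forbids at most `e(u, s)` colours of `L s`. -/
lemma exists_free_color {L' : V → Finset C} {A : Finset V} {f : V → C} {s : V}
    (hf : ∀ u ∈ A, u ≠ s ∧ f u ∈ cov.L u) (hsub : L' s ⊆ cov.L s)
    (hslack : G.degIn A s < (L' s).card) : ∃ x ∈ L' s, ∀ u ∈ A, ¬ cov.HAdj (f u) x := by
  let forbidden := A.biUnion fun u => (L' s).filter fun x => cov.HAdj (f u) x
  have hcard : forbidden.card ≤ G.degIn A s := calc
    forbidden.card ≤ ∑ u ∈ A, ((L' s).filter fun x => cov.HAdj (f u) x).card := card_biUnion_le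
    _ ≤ ∑ u ∈ A, G.e s u := sum_le_sum fun u hu =>
      ((card_le_card (filter_subset_filter _ hsub)).trans
        (cov.matching u s (hf u hu).1 (f u) (hf u hu).2)).trans_eq (G.symm u s)
  obtain ⟨x, hx, hxf⟩ := exists_mem_notMem_of_card_lt_card (hcard.trans_lt hslack)
  exact ⟨x, hx, fun u hu h => hxf (mem_biUnion.2 ⟨u, hu, mem_filter.2 ⟨hx, h⟩⟩)⟩

/-- Greedy colouring: a slack vertex `s` is coloured after the rest of `A`, which is handled by
induction since deleting `s` keeps the hypotheses. -/
theorem exists_isColoringOn_of_reach_slack [Nonempty C] (L' : V → Finset C) (A : Finset V)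
    (hsub : ∀ w ∈ A, L' w ⊆ cov.L w) (hdeg : ∀ w ∈ A, G.degIn A w ≤ (L' w).card)
    (hreach : ∀ w ∈ A, ∃ t, G.degIn A t < (L' t).card ∧ ReflTransGen (G.AdjIn A) w t) :
    ∃ f, cov.IsColoringOn L' A f := by
  induction A using Finset.strongInduction with
  | H A ih =>
  obtain rfl | ⟨w, hw⟩ := A.eq_empty_or_nonempty
  · exact ⟨fun _ => Classical.arbitrary C, by simp [IsColoringOn]⟩
  obtain ⟨s, hslack, hws⟩ := hreach w hw
  have hs : s ∈ A := mem_of_reflTransGen_adjIn hw hws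
  obtain ⟨f, hf⟩ := ih (A.erase s) (erase_ssubset hs) (fun u hu => hsub u (mem_of_mem_erase hu))
    (fun u hu => (degIn_erase_le A s u).trans (hdeg u (mem_of_mem_erase hu)))
    (exists_reach_slack_erase hdeg hreach hs)
  obtain ⟨x, hx, hfree⟩ := cov.exists_free_color
    (fun u hu => ⟨ne_of_mem_erase hu, hsub u (mem_of_mem_erase hu) (hf.1 u hu)⟩) (hsub s hs)
    ((degIn_erase_le A s s).trans_lt hslack)
  exact ⟨_, insert_erase hs ▸ hf.update (notMem_erase s A) hx hfree⟩

theorem colorable_of_deg_lt [Fintype V] (hconn : G.toSimpleGraph.Connected)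
    (hL : ∀ v, G.deg v ≤ (cov.L v).card) {t : V} (ht : G.deg t < (cov.L t).card) :
    cov.Colorable := by
  obtain ⟨x, -⟩ := card_pos.1 (Nat.zero_lt_of_lt ht)
  have : Nonempty C := ⟨x⟩
  obtain ⟨f, hf⟩ := cov.exists_isColoringOn_of_reach_slack cov.L univ (fun _ _ => subset_rfl)
    (fun w _ => hL w)
    (fun w _ => ⟨t, ht, reflTransGen_adjIn_univ_of_reachable (hconn.preconnected w t)⟩)
  exact colorable_of_isColoringOn_univ (fun _ => subset_rfl) hf

theorem colorable_of_card_filter_hAdj_lt [Fintype V] {v₁ v₂ : V}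
    (hconn : (G.induce ({v₁}ᶜ : Set V)).toSimpleGraph.Connected)
    (hL : ∀ v, G.deg v ≤ (cov.L v).card) (hadj : G.Adj v₁ v₂) {x : C} (hx : x ∈ cov.L v₁)
    (hlt : ((cov.L v₂).filter fun y => cov.HAdj x y).card < G.e v₁ v₂) : cov.Colorable := by
  have : Nonempty C := ⟨x⟩
  set A := univ.erase v₁
  set L' : V → Finset C := fun w => (cov.L w).filter fun y => ¬ cov.HAdj x y
  have hsplit : ∀ w, G.degIn A w + G.e w v₁ ≤
      (L' w).card + ((cov.L w).filter fun y => cov.HAdj x y).card := fun w => by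
    rw [degIn_erase_add (mem_univ v₁), add_comm, card_filter_add_card_filter_not]
    exact hL w
  have hA : ∀ v ∈ ({v₁}ᶜ : Set V), v ∈ A := fun v hv => mem_erase.2 ⟨hv, mem_univ v⟩
  obtain ⟨f, hf⟩ := cov.exists_isColoringOn_of_reach_slack L' A (fun _ _ => filter_subset _ _)
    (fun w hw => by
      have := hsplit w
      have := cov.matching v₁ w (ne_of_mem_erase hw).symm x hx
      rw [G.symm v₁ w] at this
      omega)
    (fun w hw => ⟨v₂, by have := hsplit v₂; rw [G.symm] at hlt; omega,
      reflTransGen_adjIn_of_reachable_induce (u := ⟨w, ne_of_mem_erase hw⟩)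
        (v := ⟨v₂, hadj.symm.1⟩) hA (hconn.preconnected _ _)⟩)
  have hfree : ∀ u ∈ A, ¬ cov.HAdj (f u) x := fun u hu h =>
    (mem_filter.1 (hf.1 u hu)).2 (cov.Hsymm _ _ h)
  have hxL' : x ∈ L' v₁ := mem_filter.2 ⟨hx, cov.Hirrefl x⟩
  exact colorable_of_isColoringOn_univ (fun _ => filter_subset _ _)
    (insert_erase (mem_univ v₁) ▸ hf.update (notMem_erase v₁ univ) hxL' hfree)

lemma card_L_eq_of_biregular {u v : V} {m : ℕ} (hm : 0 < m)
    (hu : ∀ x ∈ cov.L u, ((cov.L v).filter fun y => cov.HAdj x y).card = m)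
    (hv : ∀ y ∈ cov.L v, ((cov.L u).filter fun x => cov.HAdj y x).card = m) :
    (cov.L u).card = (cov.L v).card := by
  have hv' : ∀ y ∈ cov.L v, ((cov.L u).bipartiteBelow cov.HAdj y).card = m := fun y hy => by
    rw [← hv y hy, bipartiteBelow]
    exact congrArg card (filter_congr fun x _ => ⟨cov.Hsymm x y, cov.Hsymm y x⟩)
  exact Nat.eq_of_mul_eq_mul_right hm (card_mul_eq_card_mul cov.HAdj hu hv')

end Cover

end Multigraph

open Multigraph in
/-- **Lemma (regularity).** Let `G` be a 2-connected multigraph and `(L,H)` a cover with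
`|L v| ≥ deg v` for all `v`. If `G` is not `(L,H)`-colorable then `G` is regular and for every
pair of adjacent vertices `v₁, v₂` the bipartite graph between `L v₁` and `L v₂` is
`e_G(v₁,v₂)`-regular. -/
theorem statement6 {V C : Type} [Fintype V] (G : Multigraph V)
    (h2c : TwoConnected G) (cov : Cover G C)
    (hL : ∀ v, G.deg v ≤ (cov.L v).card)
    (hnc : ¬ cov.Colorable) :
    (∀ u v : V, G.deg u = G.deg v) ∧
    ∀ v₁ v₂ : V, G.Adj v₁ v₂ →
      (∀ x ∈ cov.L v₁, ((cov.L v₂).filter fun y => cov.HAdj x y).card = G.e v₁ v₂) ∧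
      (∀ y ∈ cov.L v₂, ((cov.L v₁).filter fun x => cov.HAdj y x).card = G.e v₁ v₂) := by
  have hcard : ∀ v, (cov.L v).card = G.deg v := fun v =>
    (hL v).antisymm' (not_lt.1 fun h => hnc (cov.colorable_of_deg_lt h2c.1 hL h))
  have hfull : ∀ v₁ v₂, G.Adj v₁ v₂ → ∀ x ∈ cov.L v₁,
      ((cov.L v₂).filter fun y => cov.HAdj x y).card = G.e v₁ v₂ := fun v₁ v₂ hadj x hx =>
    (cov.matching v₁ v₂ hadj.1 x hx).antisymm
      (not_lt.1 fun h => hnc (cov.colorable_of_card_filter_hAdj_lt (h2c.2.2 v₁) hL hadj hx h))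
  have hsymm : ∀ v₁ v₂, G.Adj v₁ v₂ → ∀ y ∈ cov.L v₂,
      ((cov.L v₁).filter fun x => cov.HAdj y x).card = G.e v₁ v₂ := fun v₁ v₂ hadj y hy =>
    (hfull v₂ v₁ hadj.symm y hy).trans (G.symm v₂ v₁)
  have hdeg_adj : ∀ u v, G.Adj u v → G.deg u = G.deg v := fun u v hadj => by
    rw [← hcard, ← hcard]
    exact cov.card_L_eq_of_biregular hadj.2 (hfull u v hadj) (hsymm u v hadj)
  exact ⟨fun u v => eq_of_reachable_of_forall_adj G.deg hdeg_adj (h2c.1.preconnected u v),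
    fun v₁ v₂ hadj => ⟨hfull v₁ v₂ hadj, hsymm v₁ v₂ hadj⟩⟩
end

section
/- Let G, G₁, G₂ be multigraphs and w a vertex with V(G) = V(G₁) ∪ V(G₂), V(G₁) ∩ V(G₂) = {w}, and e_G(u,v) = e_{G₁}(u,v) + e_{G₂}(u,v) for all u, v (where each e_{G_i} is extended by zero outside V(G_i)). If neither G₁ nor G₂ is DP-degree-colorable, then G is not DP-degree-colorable. -/
open scoped Classical

/-!
Glue two bad covers along `w`: take the disjoint union of the color sets, the union of the two
cover graphs, and join `L₁(w)` completely to `L₂(w)` so that `L(w) = L₁(w) ⊔ L₂(w)` is a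
clique. Since `deg_G = deg_{G₁} + deg_{G₂}`, the lists are long enough. A coloring of the glued
cover picks its color at `w` from `L₁(w)` or from `L₂(w)`; the vertices of that side then meet
no color of the other side, so restricting the coloring to it colors `G₁` or `G₂`.
-/

open Finset

theorem Finset.inter_disjSum {α β : Type*} [DecidableEq α] [DecidableEq β]
    [DecidableEq (α ⊕ β)] (I : Finset (α ⊕ β)) (s : Finset α) (t : Finset β) :
    I ∩ s.disjSum t = (I.toLeft ∩ s).disjSum (I.toRight ∩ t) := by
  ext (x | x) <;> simp

namespace Multigraph

variable {V : Type}

section Degree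

variable [Fintype V] (G : Multigraph V)

noncomputable def degOn (B : Set V) (v : V) : ℕ := ∑ u, if v ∈ B ∧ u ∈ B then G.e v u else 0

variable {G}

theorem degOn_of_mem {B : Set V} {v : V} (hv : v ∈ B) :
    G.degOn B v = (G.induce B).deg ⟨v, hv⟩ := by
  simp only [degOn, hv, true_and, deg, ← sum_filter]
  exact sum_subtype _ (by simp) _

theorem degOn_of_notMem {B : Set V} {v : V} (hv : v ∉ B) : G.degOn B v = 0 := by
  simp [degOn, hv]

theorem deg_eq_degOn_add_degOn {V₁ V₂ : Set V} {w : V} (hinter : V₁ ∩ V₂ ⊆ {w})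
    (hedges : ∀ u v : V, G.e u v ≠ 0 → (u ∈ V₁ ∧ v ∈ V₁) ∨ (u ∈ V₂ ∧ v ∈ V₂)) (v : V) :
    G.deg v = G.degOn V₁ v + G.degOn V₂ v := by
  rw [degOn, degOn, ← sum_add_distrib]
  refine sum_congr rfl fun u _ => ?_
  by_cases h₁ : v ∈ V₁ ∧ u ∈ V₁ <;> by_cases h₂ : v ∈ V₂ ∧ u ∈ V₂
  · obtain rfl : v = w := hinter ⟨h₁.1, h₂.1⟩
    obtain rfl : u = v := hinter ⟨h₁.2, h₂.2⟩
    simp [G.loopless]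
  · simp [h₁, h₂]
  · simp [h₁, h₂]
  · simp only [h₁, h₂, if_false, add_zero]
    by_contra h
    exact (hedges v u h).elim h₁ h₂

end Degree

namespace Cover

variable {G : Multigraph V} {C : Type}

theorem eq_of_mem_L (cov : Cover G C) {u v : V} {x : C} (hu : x ∈ cov.L u) (hv : x ∈ cov.L v) :
    u = v := by
  by_contra h
  exact disjoint_left.mp (cov.disjoint u v h) hu hv

section Restricted

variable {B : Set V} (cov : Cover (G.induce B) C)

noncomputable def listOn (v : V) : Finset C := if h : v ∈ B then cov.L ⟨v, h⟩ else ∅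

variable {cov}

theorem mem_listOn {v : V} {x : C} : x ∈ cov.listOn v ↔ ∃ h : v ∈ B, x ∈ cov.L ⟨v, h⟩ := by
  unfold listOn
  split_ifs with h <;> simp [h]

theorem mem_listOn_of_mem_L {v : B} {x : C} (hx : x ∈ cov.L v) : x ∈ cov.listOn v :=
  mem_listOn.mpr ⟨v.2, hx⟩

theorem eq_of_mem_listOn {u v : V} {x : C} (hu : x ∈ cov.listOn u) (hv : x ∈ cov.listOn v) :
    u = v := by
  obtain ⟨hu, hxu⟩ := mem_listOn.mp hu
  obtain ⟨hv, hxv⟩ := mem_listOn.mp hv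
  exact congrArg Subtype.val (cov.eq_of_mem_L hxu hxv)

theorem listOn_of_notMem {v : V} (hv : v ∉ B) : cov.listOn v = ∅ := by
  simp [listOn, hv]

theorem degOn_le_card_listOn [Fintype V] (hdeg : ∀ v, (G.induce B).deg v ≤ (cov.L v).card)
    (v : V) : G.degOn B v ≤ (cov.listOn v).card := by
  by_cases h : v ∈ B
  · rw [degOn_of_mem h, listOn, dif_pos h]
    exact hdeg _
  · rw [degOn_of_notMem h]
    exact Nat.zero_le _

theorem card_filter_listOn_le {u : B} {v : V} (huv : (u : V) ≠ v) {x : C} (hx : x ∈ cov.L u) :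
    ((cov.listOn v).filter (cov.HAdj x)).card ≤ G.e u v := by
  by_cases h : v ∈ B
  · rw [listOn, dif_pos h]
    exact cov.matching u ⟨v, h⟩ (fun he => huv (congrArg Subtype.val he)) x hx
  · simp [listOn_of_notMem h]

end Restricted

section Glue

-- `Cover.IsColoring` intersects with the classical `DecidableEq (C₁ ⊕ C₂)`.
attribute [-instance] instDecidableEqSum

variable {C₁ C₂ : Type} {V₁ V₂ : Set V}
  (cov₁ : Cover (G.induce V₁) C₁) (cov₂ : Cover (G.induce V₂) C₂) (w : V)

def glueAdj : C₁ ⊕ C₂ → C₁ ⊕ C₂ → Prop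
  | .inl a, .inl b => cov₁.HAdj a b
  | .inr a, .inr b => cov₂.HAdj a b
  | .inl a, .inr b => a ∈ cov₁.listOn w ∧ b ∈ cov₂.listOn w
  | .inr a, .inl b => b ∈ cov₁.listOn w ∧ a ∈ cov₂.listOn w

noncomputable def glueL (v : V) : Finset (C₁ ⊕ C₂) := (cov₁.listOn v).disjSum (cov₂.listOn v)

variable {cov₁ cov₂ w}

theorem card_filter_glueAdj_inl_le {u v : V} (huv : u ≠ v) {a : C₁} (ha : a ∈ cov₁.listOn u) :
    ((glueL cov₁ cov₂ v).filter (glueAdj cov₁ cov₂ w (.inl a))).card ≤ G.e u v := by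
  set S := (glueL cov₁ cov₂ v).filter (glueAdj cov₁ cov₂ w (.inl a))
  obtain ⟨hu, ha'⟩ := mem_listOn.mp ha
  have hleft : S.toLeft ⊆ (cov₁.listOn v).filter (cov₁.HAdj a) := fun b hb => by
    simpa [S, glueL, glueAdj] using hb
  have hright : S.toRight = ∅ := by
    refine eq_empty_of_forall_notMem fun b hb => ?_
    simp only [S, glueL, glueAdj, mem_toRight, mem_filter, inr_mem_disjSum] at hb
    obtain ⟨hbv, haw, hbw⟩ := hb
    exact huv ((eq_of_mem_listOn ha haw).trans
      (eq_of_mem_listOn hbv hbw).symm)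
  calc S.card = S.toLeft.card + S.toRight.card := card_toLeft_add_card_toRight.symm
    _ ≤ ((cov₁.listOn v).filter (cov₁.HAdj a)).card := by
      rw [hright, card_empty, add_zero]
      exact card_le_card hleft
    _ ≤ G.e u v := card_filter_listOn_le (u := ⟨u, hu⟩) huv ha'

theorem card_filter_glueAdj_inr_le {u v : V} (huv : u ≠ v) {a : C₂} (ha : a ∈ cov₂.listOn u) :
    ((glueL cov₁ cov₂ v).filter (glueAdj cov₁ cov₂ w (.inr a))).card ≤ G.e u v := by
  set S := (glueL cov₁ cov₂ v).filter (glueAdj cov₁ cov₂ w (.inr a))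
  obtain ⟨hu, ha'⟩ := mem_listOn.mp ha
  have hleft : S.toLeft = ∅ := by
    refine eq_empty_of_forall_notMem fun b hb => ?_
    simp only [S, glueL, glueAdj, mem_toLeft, mem_filter, inl_mem_disjSum] at hb
    obtain ⟨hbv, hbw, haw⟩ := hb
    exact huv ((eq_of_mem_listOn ha haw).trans
      (eq_of_mem_listOn hbv hbw).symm)
  have hright : S.toRight ⊆ (cov₂.listOn v).filter (cov₂.HAdj a) := fun b hb => by
    simpa [S, glueL, glueAdj] using hb
  calc S.card = S.toLeft.card + S.toRight.card := card_toLeft_add_card_toRight.symm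
    _ ≤ ((cov₂.listOn v).filter (cov₂.HAdj a)).card := by
      rw [hleft, card_empty, zero_add]
      exact card_le_card hright
    _ ≤ G.e u v := card_filter_listOn_le (u := ⟨u, hu⟩) huv ha'

variable (cov₁ cov₂ w) in
noncomputable def glue (hinter : V₁ ∩ V₂ ⊆ {w}) : Cover G (C₁ ⊕ C₂) where
  L := glueL cov₁ cov₂
  HAdj := glueAdj cov₁ cov₂ w
  Hsymm x y h := by
    rcases x with a | a <;> rcases y with b | b
    · exact cov₁.Hsymm a b h
    · exact h
    · exact h
    · exact cov₂.Hsymm a b h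
  Hirrefl x := by
    rcases x with a | a
    · exact cov₁.Hirrefl a
    · exact cov₂.Hirrefl a
  disjoint u v huv := by
    refine disjoint_left.mpr fun x hu hv => huv ?_
    rcases x with a | a
    · exact eq_of_mem_listOn (inl_mem_disjSum.mp hu) (inl_mem_disjSum.mp hv)
    · exact eq_of_mem_listOn (inr_mem_disjSum.mp hu) (inr_mem_disjSum.mp hv)
  cliques v x hx y hy hxy := by
    rcases x with a | a <;> rcases y with b | b
    · obtain ⟨hv, ha⟩ := mem_listOn.mp (inl_mem_disjSum.mp hx)
      obtain ⟨_, hb⟩ := mem_listOn.mp (inl_mem_disjSum.mp hy)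
      exact cov₁.cliques ⟨v, hv⟩ a ha b hb fun he => hxy (congrArg Sum.inl he)
    · have ha := inl_mem_disjSum.mp hx
      have hb := inr_mem_disjSum.mp hy
      obtain rfl : v = w := hinter ⟨(mem_listOn.mp ha).1, (mem_listOn.mp hb).1⟩
      exact ⟨ha, hb⟩
    · have ha := inr_mem_disjSum.mp hx
      have hb := inl_mem_disjSum.mp hy
      obtain rfl : v = w := hinter ⟨(mem_listOn.mp hb).1, (mem_listOn.mp ha).1⟩
      exact ⟨hb, ha⟩
    · obtain ⟨hv, ha⟩ := mem_listOn.mp (inr_mem_disjSum.mp hx)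
      obtain ⟨_, hb⟩ := mem_listOn.mp (inr_mem_disjSum.mp hy)
      exact cov₂.cliques ⟨v, hv⟩ a ha b hb fun he => hxy (congrArg Sum.inr he)
  edges_within x y h := by
    rcases x with a | a <;> rcases y with b | b
    · obtain ⟨u, v, ha, hb, huv⟩ := cov₁.edges_within a b h
      refine ⟨u, v, inl_mem_disjSum.mpr (mem_listOn_of_mem_L ha),
        inl_mem_disjSum.mpr (mem_listOn_of_mem_L hb), ?_⟩
      exact huv.imp (congrArg Subtype.val) fun hadj => ⟨fun he => hadj.1 (Subtype.ext he), hadj.2⟩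
    · exact ⟨w, w, inl_mem_disjSum.mpr h.1, inr_mem_disjSum.mpr h.2, Or.inl rfl⟩
    · exact ⟨w, w, inr_mem_disjSum.mpr h.2, inl_mem_disjSum.mpr h.1, Or.inl rfl⟩
    · obtain ⟨u, v, ha, hb, huv⟩ := cov₂.edges_within a b h
      refine ⟨u, v, inr_mem_disjSum.mpr (mem_listOn_of_mem_L ha),
        inr_mem_disjSum.mpr (mem_listOn_of_mem_L hb), ?_⟩
      exact huv.imp (congrArg Subtype.val) fun hadj => ⟨fun he => hadj.1 (Subtype.ext he), hadj.2⟩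
  matching u v huv x hx := by
    rcases x with a | a
    · exact card_filter_glueAdj_inl_le huv (inl_mem_disjSum.mp hx)
    · exact card_filter_glueAdj_inr_le huv (inr_mem_disjSum.mp hx)

variable {hinter : V₁ ∩ V₂ ⊆ {w}} {I : Finset (C₁ ⊕ C₂)}

theorem card_inter_glue_L (v : V) :
    (I ∩ (glue cov₁ cov₂ w hinter).L v).card =
      (I.toLeft ∩ cov₁.listOn v).card + (I.toRight ∩ cov₂.listOn v).card := by
  rw [← card_disjSum, ← inter_disjSum]
  rfl

theorem IsColoring.toLeft (hI : (glue cov₁ cov₂ w hinter).IsColoring I)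
    (hw : (I.toRight ∩ cov₂.listOn w).card = 0) : cov₁.IsColoring I.toLeft := by
  obtain ⟨hmem, hind, hcard⟩ := hI
  refine ⟨fun a ha => ?_, fun a ha b hb => hind _ (mem_toLeft.mp ha) _ (mem_toLeft.mp hb),
    fun v => ?_⟩
  · obtain ⟨v, hv⟩ := hmem _ (mem_toLeft.mp ha)
    obtain ⟨h, ha⟩ := mem_listOn.mp (inl_mem_disjSum.mp hv)
    exact ⟨⟨v, h⟩, ha⟩
  · have hright : (I.toRight ∩ cov₂.listOn v).card = 0 := by
      by_cases hv : (v : V) ∈ V₂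
      · rwa [show (v : V) = w from hinter ⟨v.2, hv⟩]
      · rw [listOn_of_notMem hv, inter_empty, card_empty]
    have := hcard v
    rwa [card_inter_glue_L, hright, add_zero, listOn, dif_pos v.2] at this

theorem IsColoring.toRight (hI : (glue cov₁ cov₂ w hinter).IsColoring I)
    (hw : (I.toLeft ∩ cov₁.listOn w).card = 0) : cov₂.IsColoring I.toRight := by
  obtain ⟨hmem, hind, hcard⟩ := hI
  refine ⟨fun a ha => ?_, fun a ha b hb => hind _ (mem_toRight.mp ha) _ (mem_toRight.mp hb),
    fun v => ?_⟩
  · obtain ⟨v, hv⟩ := hmem _ (mem_toRight.mp ha)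
    obtain ⟨h, ha⟩ := mem_listOn.mp (inr_mem_disjSum.mp hv)
    exact ⟨⟨v, h⟩, ha⟩
  · have hleft : (I.toLeft ∩ cov₁.listOn v).card = 0 := by
      by_cases hv : (v : V) ∈ V₁
      · rwa [show (v : V) = w from hinter ⟨hv, v.2⟩]
      · rw [listOn_of_notMem hv, inter_empty, card_empty]
    have := hcard v
    rwa [card_inter_glue_L, hleft, zero_add, listOn, dif_pos v.2] at this

theorem colorable_or_colorable_of_glue (h : (glue cov₁ cov₂ w hinter).Colorable) :
    cov₁.Colorable ∨ cov₂.Colorable := by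
  obtain ⟨I, hI⟩ := h
  have hw := hI.2.2 w
  rw [card_inter_glue_L, Nat.add_eq_one_iff] at hw
  rcases hw with ⟨hleft, -⟩ | ⟨-, hright⟩
  · exact Or.inr ⟨_, hI.toRight hleft⟩
  · exact Or.inl ⟨_, hI.toLeft hright⟩

end Glue

end Cover

end Multigraph

open Multigraph in
theorem statement11_general {V : Type} [Fintype V] (G : Multigraph V) (V₁ V₂ : Set V) (w : V)
    (hinter : V₁ ∩ V₂ = {w})
    (hedges : ∀ u v : V, G.e u v ≠ 0 → (u ∈ V₁ ∧ v ∈ V₁) ∨ (u ∈ V₂ ∧ v ∈ V₂))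
    (h1 : ¬ DPDegreeColorable (G.induce V₁))
    (h2 : ¬ DPDegreeColorable (G.induce V₂)) :
    ¬ DPDegreeColorable G := by
  simp only [DPDegreeColorable, not_forall] at h1 h2
  obtain ⟨C₁, cov₁, hdeg₁, hbad₁⟩ := h1
  obtain ⟨C₂, cov₂, hdeg₂, hbad₂⟩ := h2
  intro hG
  have hdeg : ∀ v, G.deg v ≤ ((Cover.glue cov₁ cov₂ w hinter.subset).L v).card := fun v => by
    rw [deg_eq_degOn_add_degOn hinter.subset hedges v]
    exact (add_le_add (cov₁.degOn_le_card_listOn hdeg₁ v)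
      (cov₂.degOn_le_card_listOn hdeg₂ v)).trans_eq (card_disjSum ..).symm
  exact (Cover.colorable_or_colorable_of_glue (hG _ _ hdeg)).elim hbad₁ hbad₂

open Multigraph in
/-- **Lemma (gluing).** Suppose `G` is the union of multigraphs `G₁ = G[V₁]` and `G₂ = G[V₂]`
sharing exactly one vertex `w` (so `V₁ ∪ V₂ = V(G)`, `V₁ ∩ V₂ = {w}` and every edge of `G` lies
within `V₁` or within `V₂`). If neither `G₁` nor `G₂` is DP-degree-colorable, then `G` is not
DP-degree-colorable. -/
theorem statement11 {V : Type} [Fintype V] (G : Multigraph V) (V₁ V₂ : Set V) (w : V)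
    (hunion : V₁ ∪ V₂ = Set.univ) (hinter : V₁ ∩ V₂ = {w})
    (hedges : ∀ u v : V, G.e u v ≠ 0 → (u ∈ V₁ ∧ v ∈ V₁) ∨ (u ∈ V₂ ∧ v ∈ V₂))
    (h1 : ¬ DPDegreeColorable (G.induce V₁))
    (h2 : ¬ DPDegreeColorable (G.induce V₂)) :
    ¬ DPDegreeColorable G :=
  statement11_general G V₁ V₂ w hinter hedges h1 h2
end
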